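/- There do not exist real numbers γ_{1,0}, γ_{2,0}, γ_{2,1} with γ_{1,0} = 1 and γ_{2,0} + γ_{2,1} = 1 such that the coefficients β_{j,m} defined by the stated recursion with M = 2 satisfy both consistency equations β_{2,2}/β_{1,2}² = 1/2 and β_{3,2}/β_{1,2}² = 1 (with β_{1,2} ≠ 0) while the quantities S̃ defined by the stated downward recursion satisfy S̃_{1,1} > 0 and S̃_{2,2} > 0; i.e., there is no unconditionally energy stable second order two-stage threshold dynamics method of this type. -/
import Mathlib


/-- The recursion defining the consistency coefficients `β_{j,m}`, `j = 1,…,5`,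
`m = 0,…,M`, of the `M`-stage threshold dynamics scheme with weights `γ`. -/
def betaRec (M : ℕ) (γ β : ℕ → ℕ → ℝ) : Prop :=
  (∀ j, β j 0 = 0) ∧
  ∀ m, 1 ≤ m → m ≤ M →
    β 1 m = 1 + ∑ i ∈ Finset.range m, γ m i * β 1 i ∧
    β 2 m = 1 / 2 + (∑ i ∈ Finset.range m, γ m i * β 2 i)
      + ∑ i ∈ Finset.range m, γ m i * β 4 i ∧
    β 3 m = 2 / 3 + (1 / 6) * (∑ i ∈ Finset.range m, γ m i * β 1 i) ^ 3
      - (1 / 4) * (∑ i ∈ Finset.range m, γ m i * β 1 i)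
          * (∑ i ∈ Finset.range m, γ m i * (β 1 i) ^ 2)
      + (1 / 12) * (∑ i ∈ Finset.range m, γ m i * (β 1 i) ^ 3)
      + (∑ i ∈ Finset.range m, γ m i * β 3 i)
      + ∑ i ∈ Finset.range m, γ m i * β 5 i ∧
    β 4 m = 1 + ∑ i ∈ Finset.range m, γ m i * β 4 i ∧
    β 5 m = 2 + ∑ i ∈ Finset.range m, γ m i * β 5 i

/-- The downward recursion defining the stability coefficients `γ̃_{m,i}` and the
partial sums `S̃_{j,m}` from the weights `γ` of an `M`-stage scheme. -/
def tildeRec (M : ℕ) (γ γt St : ℕ → ℕ → ℝ) : Prop :=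
  (∀ i < M, γt M i = γ M i) ∧
  (∀ m, 1 ≤ m → m < M → ∀ i < m,
    γt m i = γ m i - ∑ j ∈ Finset.Icc (m + 1) M, γt j i * St j m / St j j) ∧
  (∀ j m : ℕ, St j m = ∑ i ∈ Finset.range m, γt j i)

/-- There is no unconditionally energy stable, second order accurate two-stage
threshold dynamics scheme: no weights `γ` with unit row sums satisfy both
consistency equations and the stability conditions `S̃_{m,m} > 0` simultaneously. -/
theorem no_second_order_stable_two_stage :
    ¬ ∃ (γ β γt St : ℕ → ℕ → ℝ),
      (∀ m, 1 ≤ m → m ≤ 2 → ∑ i ∈ Finset.range m, γ m i = 1) ∧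
      betaRec 2 γ β ∧ β 1 2 ≠ 0 ∧
      β 2 2 / (β 1 2) ^ 2 = 1 / 2 ∧ β 3 2 / (β 1 2) ^ 2 = 1 ∧
      tildeRec 2 γ γt St ∧
      (∀ m, 1 ≤ m → m ≤ 2 → 0 < St m m) := by
  rintro ⟨γ, β, γt, St, hsum, ⟨h0, hrec⟩, hne, h2, h3, ⟨hgM, hgm, hSt⟩, hpos⟩
  have hs1 := hsum 1 le_rfl (by norm_num)
  have hs2 := hsum 2 (by norm_num) le_rfl
  simp [Finset.sum_range_succ] at hs1 hs2
  obtain ⟨b11, b21, b31, b41, b51⟩ := hrec 1 le_rfl (by norm_num)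
  obtain ⟨b12, b22, b32, b42, b52⟩ := hrec 2 (by norm_num) le_rfl
  simp [Finset.sum_range_succ, h0] at b11 b21 b31 b41 b51 b12 b22 b32 b42 b52
  -- values at stage 1
  simp only [b11, b21, b31, b41, b51] at b12 b22 b32
  -- tilde coefficients
  have hg20 := hgM 0 (by norm_num)
  have hg21 := hgM 1 (by norm_num)
  have hg10 := hgm 1 le_rfl (by norm_num) 0 (by norm_num)
  have hSt22 : St 2 2 = 1 := by
    rw [hSt 2 2]; simp [Finset.sum_range_succ, hg20, hg21, hs2]
  have hSt21 : St 2 1 = γ 2 0 := by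
    rw [hSt 2 1]; simp [Finset.sum_range_succ, hg20]
  have hSt11 : St 1 1 = γt 1 0 := by
    rw [hSt 1 1]; simp [Finset.sum_range_succ]
  have hIcc : Finset.Icc 2 2 = {2} := by decide
  rw [hIcc, Finset.sum_singleton, hg20, hSt21, hSt22, hs1] at hg10
  have hp1 := hpos 1 le_rfl (by norm_num)
  rw [hSt11, hg10] at hp1
  -- algebra
  have hb2 := h2
  have hb3 := h3
  rw [div_eq_iff (pow_ne_zero 2 hne)] at hb2 hb3
  rw [b12, b22] at hb2
  rw [b12, b32] at hb3
  -- b2 : 1/2 + ... = 1/2 * (1 + γ21)^2, etc.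
  have hb : γ 2 1 = 0 ∨ γ 2 1 = 1 := by
    have : γ 2 1 * (γ 2 1 - 1) = 0 := by nlinarith [hb2]
    rcases mul_eq_zero.mp this with h | h
    · left; exact h
    · right; linarith
  rcases hb with h | h
  · have ha : γ 2 0 = 1 := by linarith
    rw [ha] at hp1; norm_num at hp1
  · rw [h] at hb3; norm_num at hb3
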